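/- arXiv:1605.05895 — 5 statements merged into one kernel-verified Lean document; each statement's English description precedes it below -/
import Mathlib

section
/- Let γ ∈ (0,1] and let π denote the circle constant. The set { m₁ + γ·m₂ : m₁, m₂ ∈ ℝ, m₁ ≥ 8π, m₂ ≥ 8π/γ, (m₁ − m₂)² = 8π(m₁ + m₂/γ) } has a least element, and this least element equals 16π(1 + γ); in particular the minimum is attained at m₁ = 8π, m₂ = 8π(2 + 1/γ). -/
open Real

/-!
Write `p = 8π`. On either side of the diagonal the quadratic identity factors once the lower
bound on the smaller mass is inserted: the gap `d = |m₁ - m₂|` satisfies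
`(d + p)(γ d - p(1 + γ)) ≥ 0` if `m₁ ≤ m₂`, and `(γ d + p)(γ d - p(1 + γ)) ≥ 0` if `m₂ ≤ m₁`.
Hence `γ d ≥ p(1 + γ)`, and together with the lower bounds (and `γ ≤ 1` in the second case)
this gives `m₁ + γ m₂ ≥ 2p(1 + γ)`, with equality at `m₁ = p`, `m₂ = p(2 + 1/γ)`.
-/

namespace MassIdentity

variable {γ p x y : ℝ}

theorem gap_bound_of_le (hγ : 0 ≤ γ) (hp : 0 < p) (h : γ * (x - y) ^ 2 = p * (γ * x + y))
    (hx : p ≤ x) (hxy : x ≤ y) : p * (1 + γ) ≤ γ * (y - x) := by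
  have factored : (y - x + p) * (γ * (y - x) - p * (1 + γ)) = p * (1 + γ) * (x - p) := by
    linear_combination h
  have hrhs : 0 ≤ p * (1 + γ) * (x - p) :=
    mul_nonneg (mul_nonneg hp.le (by linarith)) (sub_nonneg.2 hx)
  exact sub_nonneg.1 (nonneg_of_mul_nonneg_right (factored ▸ hrhs) (by linarith))

theorem gap_bound_of_ge (hγ : 0 ≤ γ) (hp : 0 < p) (h : γ * (x - y) ^ 2 = p * (γ * x + y))
    (hy : p ≤ γ * y) (hyx : y ≤ x) : p * (1 + γ) ≤ γ * (x - y) := by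
  have factored :
      (γ * (x - y) + p) * (γ * (x - y) - p * (1 + γ)) = p * (1 + γ) * (γ * y - p) := by
    linear_combination γ * h
  have hrhs : 0 ≤ p * (1 + γ) * (γ * y - p) :=
    mul_nonneg (mul_nonneg hp.le (by linarith)) (sub_nonneg.2 hy)
  have hpos : 0 < γ * (x - y) + p := by
    have : 0 ≤ γ * (x - y) := mul_nonneg hγ (sub_nonneg.2 hyx)
    linarith
  exact sub_nonneg.1 (nonneg_of_mul_nonneg_right (factored ▸ hrhs) hpos)

theorem two_mul_le_add_mul (hγ : 0 < γ) (hγ1 : γ ≤ 1) (hp : 0 < p) (hx : p ≤ x)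
    (hy : p / γ ≤ y) (h : (x - y) ^ 2 = p * (x + y / γ)) :
    2 * p * (1 + γ) ≤ x + γ * y := by
  have hy' : p ≤ γ * y := by rwa [div_le_iff₀' hγ] at hy
  have h' : γ * (x - y) ^ 2 = p * (γ * x + y) := by
    rw [h]
    field_simp
  rcases le_total x y with hxy | hyx
  · have gap := gap_bound_of_le hγ.le hp h' hx hxy
    nlinarith [mul_le_mul_of_nonneg_left hx (by linarith : (0 : ℝ) ≤ 1 + γ)]
  · have gap := gap_bound_of_ge hγ.le hp h' hy' hyx
    have hy0 : 0 ≤ y := by nlinarith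
    nlinarith [mul_le_of_le_one_left (sub_nonneg.2 hyx) hγ1, mul_le_of_le_one_left hy0 hγ1]

theorem extremal_masses (hγ : γ ≠ 0) (hp : 0 ≤ p) :
    p * (2 + 1 / γ) ≥ p / γ ∧
      (p - p * (2 + 1 / γ)) ^ 2 = p * (p + p * (2 + 1 / γ) / γ) ∧
      p + γ * (p * (2 + 1 / γ)) = 2 * p * (1 + γ) := by
  refine ⟨?_, by ring, ?_⟩
  · have : p * (2 + 1 / γ) = 2 * p + p / γ := by ring
    linarith
  · field_simp
    ring

end MassIdentity

/-- The set of values m₁ + γ·m₂ over blow-up masses satisfying the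
lower bounds and the quadratic identity has a least element, equal to 16π(1+γ),
attained at m₁ = 8π, m₂ = 8π(2 + 1/γ). -/
theorem stmt_0 (γ : ℝ) (hγ : γ ∈ Set.Ioc (0:ℝ) 1) :
    IsLeast {m : ℝ | ∃ m₁ m₂ : ℝ, m₁ ≥ 8 * π ∧ m₂ ≥ 8 * π / γ ∧
        (m₁ - m₂) ^ 2 = 8 * π * (m₁ + m₂ / γ) ∧ m = m₁ + γ * m₂}
      (16 * π * (1 + γ)) ∧
    ((8 * π : ℝ) ≥ 8 * π ∧
      8 * π * (2 + 1 / γ) ≥ 8 * π / γ ∧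
      (8 * π - 8 * π * (2 + 1 / γ)) ^ 2 = 8 * π * (8 * π + 8 * π * (2 + 1 / γ) / γ) ∧
      8 * π + γ * (8 * π * (2 + 1 / γ)) = 16 * π * (1 + γ)) := by
  obtain ⟨hγ0, hγ1⟩ := hγ
  have hp : (0 : ℝ) < 8 * π := by positivity
  have h16 : 16 * π * (1 + γ) = 2 * (8 * π) * (1 + γ) := by ring
  obtain ⟨hbound, hquad, hvalue⟩ := MassIdentity.extremal_masses hγ0.ne' hp.le
  rw [h16]
  refine ⟨⟨⟨8 * π, 8 * π * (2 + 1 / γ), le_rfl, hbound, hquad, hvalue.symm⟩, ?_⟩, le_rfl, hbound, hquad, hvalue⟩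
  rintro _ ⟨m₁, m₂, hm₁, hm₂, hm, rfl⟩
  exact MassIdentity.two_mul_le_add_mul hγ0 hγ1 hp hm₁ hm₂ hm
end

section
/- Let γ ∈ (0,1] and let m₁, m₂ ∈ ℝ satisfy m₁ ≥ 8π, m₂ ≥ 8π/γ, and (m₁ − m₂)² = 8π(m₁ + m₂/γ). Then m₁ + γ·m₂ ≥ 16π(1 + γ). -/
open Real

/-! With `k = 8π` and `d = m₁ - m₂`, the quadratic identity makes each of `m₁ - k`, `γ m₂ - k`
and `m₁ + γ m₂ - 2(1 + γ)k` a product of two factors linear in `d`, up to a positive constant: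
`(d - k)(γd + (1 + γ)k)`, `(γd - (1 + γ)k)(γd + k)` and `(d - 2k)(γd + (1 + γ)k)`.
The lower bounds on the masses then force either `γd ≤ -(1 + γ)k` or `γd ≥ (1 + γ)k`; in the second
case `d ≥ (1 + 1/γ)k ≥ 2k` because `γ ≤ 1`. -/

namespace BlowUpMass

variable {k γ m₁ m₂ : ℝ}

section Factorizations

variable (hq : γ * (m₁ - m₂) ^ 2 = k * (γ * m₁ + m₂))
include hq

theorem mul_sub_fst_eq :
    k * (1 + γ) * (m₁ - k) = (m₁ - m₂ - k) * (γ * (m₁ - m₂) + (1 + γ) * k) := by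
  linear_combination -hq

theorem mul_sub_snd_eq :
    k * (1 + γ) * (γ * m₂ - k) = (γ * (m₁ - m₂) - (1 + γ) * k) * (γ * (m₁ - m₂) + k) := by
  linear_combination -γ * hq

theorem mul_sub_weighted_sum_eq :
    k * (m₁ + γ * m₂ - 2 * (1 + γ) * k) = (m₁ - m₂ - 2 * k) * (γ * (m₁ - m₂) + (1 + γ) * k) := by
  linear_combination -hq

end Factorizations

theorem sub_two_mul_mul_nonneg {d : ℝ} (hk : 0 < k) (hγ₀ : 0 < γ) (hγ₁ : γ ≤ 1)
    (h₁ : 0 ≤ (d - k) * (γ * d + (1 + γ) * k))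
    (h₂ : 0 ≤ (γ * d - (1 + γ) * k) * (γ * d + k)) :
    0 ≤ (d - 2 * k) * (γ * d + (1 + γ) * k) := by
  rcases le_or_gt (γ * d + (1 + γ) * k) 0 with hneg | hpos
  · have hd : d < 2 * k := by nlinarith
    exact mul_nonneg_of_nonpos_of_nonpos (by linarith) hneg
  · have hdk : k ≤ d := by linarith [(mul_nonneg_iff_of_pos_right hpos).1 h₁]
    have hγd : (1 + γ) * k ≤ γ * d := by
      have : 0 < γ * d + k := by nlinarith
      linarith [(mul_nonneg_iff_of_pos_right this).1 h₂]
    have hd : 2 * k ≤ d := by nlinarith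
    exact mul_nonneg (by linarith) hpos.le

theorem two_mul_le_add_mul (hk : 0 < k) (hγ₀ : 0 < γ) (hγ₁ : γ ≤ 1)
    (h₁ : k ≤ m₁) (h₂ : k ≤ γ * m₂) (hq : γ * (m₁ - m₂) ^ 2 = k * (γ * m₁ + m₂)) :
    2 * (1 + γ) * k ≤ m₁ + γ * m₂ := by
  have hpos : 0 < k * (1 + γ) := by positivity
  have hfst := mul_sub_fst_eq hq ▸ mul_nonneg hpos.le (sub_nonneg.2 h₁)
  have hsnd := mul_sub_snd_eq hq ▸ mul_nonneg hpos.le (sub_nonneg.2 h₂)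
  have key := mul_sub_weighted_sum_eq hq ▸ sub_two_mul_mul_nonneg hk hγ₀ hγ₁ hfst hsnd
  exact sub_nonneg.1 (nonneg_of_mul_nonneg_right key hk)

end BlowUpMass

/-- lower bound m₁ + γ·m₂ ≥ 16π(1+γ) for blow-up masses. -/
theorem stmt_1 (γ m₁ m₂ : ℝ) (hγ : γ ∈ Set.Ioc (0:ℝ) 1)
    (h₁ : m₁ ≥ 8 * π) (h₂ : m₂ ≥ 8 * π / γ)
    (hq : (m₁ - m₂) ^ 2 = 8 * π * (m₁ + m₂ / γ)) :
    m₁ + γ * m₂ ≥ 16 * π * (1 + γ) := by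
  obtain ⟨hγ₀, hγ₁⟩ := hγ
  have h₂' : 8 * π ≤ γ * m₂ := (div_le_iff₀' hγ₀).1 h₂
  have hq' : γ * (m₁ - m₂) ^ 2 = 8 * π * (γ * m₁ + m₂) := by
    rw [hq]
    field_simp
  have := BlowUpMass.two_mul_le_add_mul (by positivity) hγ₀ hγ₁ h₁ h₂' hq'
  linarith
end

section
/- Let r0 > 0 and ε > 0, and let u_ε : ℝ² → ℝ be defined by u_ε(x) = log(ε²/((ε² + ‖x‖²)²)). Then u_ε is differentiable with Euclidean gradient ∇u_ε(x) = −4x/(ε² + ‖x‖²), and ∫_B ‖∇u_ε(x)‖² dx = 16π·(log((ε² + r0²)/ε²) − r0²/(ε² + r0²)). -/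
/-!
Writing `u_ε x = g (‖x‖²)` with `g t = log (ε² / (ε² + t)²)`, the chain rule gives
`∇u_ε x = 2 g'(‖x‖²) x = -4x / (ε² + ‖x‖²)`, so `‖∇u_ε‖² = 16‖x‖² / (ε² + ‖x‖²)²` is radial.
Polar coordinates turn the energy on the ball into `2π ∫₀^r₀ 16t³ / (ε² + t²)² dt`, and
`t ↦ 8 (log ((ε² + t²) / ε²) - t² / (ε² + t²))` is a primitive of the integrand vanishing at `0`.
-/

open Real

/-- The Liouville bubble u_ε on ℝ². -/
noncomputable def bubble (ε : ℝ) (x : EuclideanSpace ℝ (Fin 2)) : ℝ :=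
  Real.log (ε ^ 2 / (ε ^ 2 + ‖x‖ ^ 2) ^ 2)

open MeasureTheory Metric Set

theorem HasDerivAt.hasGradientAt_comp_norm_sq {E : Type*} [NormedAddCommGroup E]
    [InnerProductSpace ℝ E] [CompleteSpace E] {g : ℝ → ℝ} {g' : ℝ} {x : E}
    (hg : HasDerivAt g g' (‖x‖ ^ 2)) :
    HasGradientAt (fun y => g (‖y‖ ^ 2)) ((2 * g') • x) x := by
  have hdual : InnerProductSpace.toDual ℝ E ((2 * g') • x) = g' • 2 • innerSL ℝ x := by
    ext y
    simp only [map_smul, smul_apply, InnerProductSpace.toDual_apply_apply,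
      smul_eq_mul, coe_innerSL_apply, nsmul_eq_mul, Nat.cast_ofNat]
    ring
  exact hasGradientAt_iff_hasFDerivAt.mpr
    (hdual ▸ hg.comp_hasFDerivAt x (hasStrictFDerivAt_norm_sq x).hasFDerivAt)

theorem setIntegral_ball_fun_norm_addHaar {E F : Type*} [NormedAddCommGroup E]
    [NormedSpace ℝ E] [Nontrivial E] [FiniteDimensional ℝ E] [MeasurableSpace E] [BorelSpace E]
    [NormedAddCommGroup F] [NormedSpace ℝ F] (μ : Measure E) [μ.IsAddHaarMeasure]
    (f : ℝ → F) {r : ℝ} (hr : 0 ≤ r) :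
    ∫ x in ball (0 : E) r, f ‖x‖ ∂μ = Module.finrank ℝ E • μ.real (ball 0 1) •
      ∫ y in 0..r, y ^ (Module.finrank ℝ E - 1) • f y := by
  have hball : ∫ x in ball (0 : E) r, f ‖x‖ ∂μ = ∫ x, (Iio r).indicator f ‖x‖ ∂μ := by
    rw [← integral_indicator measurableSet_ball]
    congr 1 with x
    by_cases hx : ‖x‖ < r <;> simp [indicator, hx]
  have hradial : ∫ y in Ioi (0 : ℝ), y ^ (Module.finrank ℝ E - 1) • (Iio r).indicator f y =
      ∫ y in 0..r, y ^ (Module.finrank ℝ E - 1) • f y := by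
    rw [intervalIntegral.integral_of_le hr, integral_Ioc_eq_integral_Ioo, ← Ioi_inter_Iio,
      ← setIntegral_indicator measurableSet_Iio]
    congr 1 with y
    by_cases hy : y < r <;> simp [indicator, hy]
  rw [hball, integral_fun_norm_addHaar μ, hradial]

theorem EuclideanSpace.setIntegral_ball_fin_two_fun_norm (f : ℝ → ℝ) {r : ℝ} (hr : 0 ≤ r) :
    ∫ x in ball (0 : EuclideanSpace ℝ (Fin 2)) r, f ‖x‖ = 2 * π * ∫ y in 0..r, y * f y := by
  rw [setIntegral_ball_fun_norm_addHaar volume f hr, finrank_euclideanSpace_fin, measureReal_def,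
    EuclideanSpace.volume_ball_fin_two]
  simp only [ENNReal.toReal_mul, ENNReal.toReal_pow, ENNReal.toReal_ofReal zero_le_one,
    ENNReal.toReal_ofReal pi_pos.le, Nat.add_one_sub_one, pow_one, nsmul_eq_mul, smul_eq_mul]
  push_cast
  ring

theorem hasGradientAt_bubble {ε : ℝ} (hε : ε ≠ 0) (x : EuclideanSpace ℝ (Fin 2)) :
    HasGradientAt (bubble ε) ((-4 / (ε ^ 2 + ‖x‖ ^ 2)) • x) x := by
  have hpos : 0 < ε ^ 2 + ‖x‖ ^ 2 := by positivity
  have hprofile : HasDerivAt (fun t => log (ε ^ 2 / (ε ^ 2 + t) ^ 2))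
      (-2 / (ε ^ 2 + ‖x‖ ^ 2)) (‖x‖ ^ 2) := by
    have hden : HasDerivAt (fun t : ℝ => (ε ^ 2 + t) ^ 2) (2 * (ε ^ 2 + ‖x‖ ^ 2)) (‖x‖ ^ 2) := by
      simpa using ((hasDerivAt_id (‖x‖ ^ 2)).const_add (ε ^ 2)).fun_pow 2
    refine (((hasDerivAt_const _ (ε ^ 2)).fun_div hden (pow_pos hpos 2).ne').log
      (div_pos (sq_pos_of_ne_zero hε) (pow_pos hpos 2)).ne').congr_deriv ?_
    field_simp
    ring
  rw [show -4 / (ε ^ 2 + ‖x‖ ^ 2) = 2 * (-2 / (ε ^ 2 + ‖x‖ ^ 2)) by ring]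
  exact hprofile.hasGradientAt_comp_norm_sq

theorem sq_norm_gradient_bubble {ε : ℝ} (hε : ε ≠ 0) (x : EuclideanSpace ℝ (Fin 2)) :
    ‖gradient (bubble ε) x‖ ^ 2 = 16 * ‖x‖ ^ 2 / (ε ^ 2 + ‖x‖ ^ 2) ^ 2 := by
  rw [(hasGradientAt_bubble hε x).gradient, norm_smul, mul_pow, norm_div, div_pow]
  simp only [norm_neg, norm_ofNat, norm_eq_abs, sq_abs]
  ring

theorem integral_bubble_energy_profile {ε : ℝ} (hε : ε ≠ 0) (r : ℝ) :
    ∫ y in 0..r, y * (16 * y ^ 2 / (ε ^ 2 + y ^ 2) ^ 2) =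
      8 * (log ((ε ^ 2 + r ^ 2) / ε ^ 2) - r ^ 2 / (ε ^ 2 + r ^ 2)) := by
  have hpos : ∀ y : ℝ, 0 < ε ^ 2 + y ^ 2 := fun y => by positivity
  have hderiv : ∀ y ∈ uIcc 0 r, HasDerivAt
      (fun y => 8 * (log ((ε ^ 2 + y ^ 2) / ε ^ 2) - y ^ 2 / (ε ^ 2 + y ^ 2)))
      (y * (16 * y ^ 2 / (ε ^ 2 + y ^ 2) ^ 2)) y := by
    intro y _
    have hsum : HasDerivAt (fun y : ℝ => ε ^ 2 + y ^ 2) (2 * y) y := by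
      simpa using (hasDerivAt_pow 2 y).const_add (ε ^ 2)
    have hlog := (hsum.div_const (ε ^ 2)).log (div_pos (hpos y) (sq_pos_of_ne_zero hε)).ne'
    have hquot := (hasDerivAt_pow 2 y).fun_div hsum (hpos y).ne'
    refine ((hlog.fun_sub hquot).const_mul 8).congr_deriv ?_
    field_simp
    ring
  have hcont : Continuous fun y : ℝ => y * (16 * y ^ 2 / (ε ^ 2 + y ^ 2) ^ 2) := by
    fun_prop (disch := exact fun y => (pow_pos (hpos y) 2).ne')
  rw [intervalIntegral.integral_eq_sub_of_hasDerivAt hderiv (hcont.intervalIntegrable 0 r)]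
  simp [hε]

/-- u_ε is differentiable with gradient −4x/(ε²+‖x‖²), and Dirichlet
energy over the ball B = B(0,r0) equal to 16π(log((ε²+r0²)/ε²) − r0²/(ε²+r0²)). -/
theorem stmt_9 (r0 ε : ℝ) (hr : 0 < r0) (hε : 0 < ε) :
    (∀ x : EuclideanSpace ℝ (Fin 2),
      HasGradientAt (bubble ε) ((-4 / (ε ^ 2 + ‖x‖ ^ 2)) • x) x) ∧
    ∫ x in Metric.ball (0 : EuclideanSpace ℝ (Fin 2)) r0, ‖gradient (bubble ε) x‖ ^ 2
      = 16 * π * (Real.log ((ε ^ 2 + r0 ^ 2) / ε ^ 2) - r0 ^ 2 / (ε ^ 2 + r0 ^ 2)) := by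
  refine ⟨hasGradientAt_bubble hε.ne', ?_⟩
  calc ∫ x in ball (0 : EuclideanSpace ℝ (Fin 2)) r0, ‖gradient (bubble ε) x‖ ^ 2
      = ∫ x in ball (0 : EuclideanSpace ℝ (Fin 2)) r0, 16 * ‖x‖ ^ 2 / (ε ^ 2 + ‖x‖ ^ 2) ^ 2 := by
        simp_rw [sq_norm_gradient_bubble hε.ne']
    _ = 2 * π * ∫ y in 0..r0, y * (16 * y ^ 2 / (ε ^ 2 + y ^ 2) ^ 2) :=
        EuclideanSpace.setIntegral_ball_fin_two_fun_norm
          (fun t => 16 * t ^ 2 / (ε ^ 2 + t ^ 2) ^ 2) hr.le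
    _ = _ := by
        rw [integral_bubble_energy_profile hε.ne']
        ring
end

section
/- Let r0 > 0 and let u_ε : ℝ² → ℝ be defined by u_ε(x) = log(ε²/((ε² + ‖x‖²)²)) for ε > 0. There exists a constant C > 0 such that for every ε ∈ (0,1], |(π·r0²)⁻¹·∫_B u_ε(x) dx − log(ε²)| ≤ C. -/
/-!
Since `u_ε = log ε² - 2 log (ε² + ‖x‖²)`, the mean of `u_ε` over `B` minus `log ε²` is `-2` times
the mean of `log (ε² + ‖x‖²)`. For `ε ≤ 1` this integrand lies between
`2 log ‖x‖ ≥ -2 ‖x‖⁻¹` and `log (1 + r0²)`, and `‖x‖⁻¹` is integrable on a disc, so the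
mean stays bounded uniformly in `ε`.
-/

open Real

open MeasureTheory Metric Module

theorem abs_log_le_log_add_two_mul_inv {s y M : ℝ} (hs : 0 < s) (hsy : s ^ 2 ≤ y) (hyM : y ≤ M)
    (hM : 1 ≤ M) : |log y| ≤ log M + 2 * s⁻¹ := by
  have hy : 0 < y := (pow_pos hs 2).trans_le hsy
  have hlogM : 0 ≤ log M := log_nonneg hM
  have h_upper : log y ≤ log M := log_le_log hy hyM
  have h_lower : -log y ≤ 2 * s⁻¹ :=
    calc -log y ≤ -log (s ^ 2) := neg_le_neg (log_le_log (by positivity) hsy)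
      _ = 2 * log s⁻¹ := by rw [log_pow, log_inv]; push_cast; ring
      _ ≤ 2 * s⁻¹ := by gcongr; exact log_le_self (by positivity)
  rw [abs_le]
  constructor <;> linarith [inv_pos.2 hs]

section HaarMeasure

variable {E : Type*} [NormedAddCommGroup E] [NormedSpace ℝ E] [FiniteDimensional ℝ E]
  [MeasurableSpace E] [BorelSpace E] {μ : Measure E} [μ.IsAddHaarMeasure]

theorem integrableOn_ball_inv_norm (hE : 1 < finrank ℝ E) (r : ℝ) :
    IntegrableOn (fun x : E ↦ ‖x‖⁻¹) (ball 0 r) μ := by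
  refine integrableOn_ball_of_norm_le_rpow (C := 1) (α := 1) hE.le (by exact_mod_cast hE)
    (ae_of_all _ fun x ↦ ?_) measurable_norm.inv.aestronglyMeasurable
  simp [rpow_neg_one]

theorem abs_setIntegral_log_sq_add_norm_sq_le (hE : 1 < finrank ℝ E) {ε : ℝ} (hε : 0 < ε)
    (hε1 : ε ≤ 1) (r : ℝ) :
    |∫ x in ball 0 r, log (ε ^ 2 + ‖x‖ ^ 2) ∂μ| ≤
      ∫ x in ball 0 r, (log (1 + r ^ 2) + 2 * ‖x‖⁻¹) ∂μ := by
  have : Nontrivial E := Module.nontrivial_of_finrank_pos (R := ℝ) (by omega)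
  have h_int : IntegrableOn (fun x : E ↦ log (1 + r ^ 2) + 2 * ‖x‖⁻¹) (ball 0 r) μ :=
    (integrableOn_const measure_ball_lt_top.ne).add
      ((integrableOn_ball_inv_norm hE r).const_mul 2)
  rw [← Real.norm_eq_abs]
  refine norm_integral_le_of_norm_le h_int ?_
  -- `‖0‖⁻¹ = 0`, so the bound can only hold away from the (null) origin.
  filter_upwards [ae_restrict_mem measurableSet_ball,
    ae_restrict_of_ae ((Set.countable_singleton (0 : E)).ae_notMem μ)] with x hx hx0
  have hxr : ‖x‖ < r := by simpa using hx
  refine abs_log_le_log_add_two_mul_inv (norm_pos_iff.2 (by simpa using hx0))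
    (le_add_of_nonneg_left (by positivity)) ?_ (le_add_of_nonneg_right (sq_nonneg r))
  have : ε ^ 2 ≤ 1 := pow_le_one₀ hε.le hε1
  nlinarith [norm_nonneg x]

end HaarMeasure

theorem bubble_eq {ε : ℝ} (hε : ε ≠ 0) (x : EuclideanSpace ℝ (Fin 2)) :
    bubble ε x = log (ε ^ 2) - 2 * log (ε ^ 2 + ‖x‖ ^ 2) := by
  have hε2 : 0 < ε ^ 2 := pow_two_pos_of_ne_zero hε
  have : 0 < ε ^ 2 + ‖x‖ ^ 2 := by positivity
  rw [bubble, log_div hε2.ne' (pow_ne_zero 2 this.ne'), Real.log_pow (ε ^ 2 + ‖x‖ ^ 2) 2]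
  push_cast; ring

theorem setIntegral_bubble {ε : ℝ} (hε : ε ≠ 0) {r : ℝ} (hr : 0 ≤ r) :
    ∫ x in ball (0 : EuclideanSpace ℝ (Fin 2)) r, bubble ε x =
      π * r ^ 2 * log (ε ^ 2) -
        2 * ∫ x in ball (0 : EuclideanSpace ℝ (Fin 2)) r, log (ε ^ 2 + ‖x‖ ^ 2) := by
  have h_cont : Continuous fun x : EuclideanSpace ℝ (Fin 2) ↦ log (ε ^ 2 + ‖x‖ ^ 2) :=
    (continuous_const.add (continuous_norm.pow 2)).log fun x ↦
      (add_pos_of_pos_of_nonneg (pow_two_pos_of_ne_zero hε) (sq_nonneg _)).ne'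
  have h_int := (h_cont.continuousOn.integrableOn_compact (μ := volume)
    (isCompact_closedBall 0 r)).mono_set ball_subset_closedBall
  have h_const : IntegrableOn (fun _ ↦ log (ε ^ 2)) (ball (0 : EuclideanSpace ℝ (Fin 2)) r) :=
    integrableOn_const measure_ball_lt_top.ne
  simp_rw [bubble_eq hε]
  rw [integral_sub h_const (h_int.const_mul 2),
    setIntegral_const, integral_const_mul, smul_eq_mul, measureReal_def,
    EuclideanSpace.volume_ball_fin_two,
    ← ENNReal.ofReal_pow hr, ← ENNReal.ofReal_mul (by positivity),
    ENNReal.toReal_ofReal (by positivity)]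
  ring

/-- mean value expansion (1/|B|)∫_B u_ε = log ε² + O(1). -/
theorem stmt_11 (r0 : ℝ) (hr : 0 < r0) :
    ∃ C > 0, ∀ ε ∈ Set.Ioc (0:ℝ) 1,
      |(π * r0 ^ 2)⁻¹ * (∫ x in Metric.ball (0 : EuclideanSpace ℝ (Fin 2)) r0, bubble ε x)
        - Real.log (ε ^ 2)| ≤ C := by
  set K := ∫ x in ball (0 : EuclideanSpace ℝ (Fin 2)) r0, (log (1 + r0 ^ 2) + 2 * ‖x‖⁻¹)
  have hK : 0 ≤ K := setIntegral_nonneg measurableSet_ball fun x _ ↦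
    add_nonneg (log_nonneg (le_add_of_nonneg_right (sq_nonneg r0))) (by positivity)
  have hA : 0 < π * r0 ^ 2 := by positivity
  refine ⟨2 * (π * r0 ^ 2)⁻¹ * K + 1, by positivity, fun ε ⟨hε, hε1⟩ ↦ ?_⟩
  calc |(π * r0 ^ 2)⁻¹ * (∫ x in ball 0 r0, bubble ε x) - log (ε ^ 2)|
      = 2 * (π * r0 ^ 2)⁻¹ * |∫ x in ball (0 : EuclideanSpace ℝ (Fin 2)) r0,
          log (ε ^ 2 + ‖x‖ ^ 2)| := by
        rw [setIntegral_bubble hε.ne' hr.le, mul_sub, inv_mul_cancel_left₀ hA.ne',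
          sub_sub_cancel_left, abs_neg, abs_mul, abs_mul, abs_two, abs_of_pos (inv_pos.2 hA)]
        ring
    _ ≤ 2 * (π * r0 ^ 2)⁻¹ * K := by
        gcongr
        exact abs_setIntegral_log_sq_add_norm_sq_le (by simp) hε hε1 r0
    _ ≤ 2 * (π * r0 ^ 2)⁻¹ * K + 1 := le_add_of_nonneg_right zero_le_one
end

section
/- Let r0 > 0, γ ∈ (0,1], λ₁ > 8π and λ₂ ≥ 0. For ε > 0 define u_ε : ℝ² → ℝ by u_ε(x) = log(ε²/((ε² + ‖x‖²)²)) and v_ε = u_ε − (π·r0²)⁻¹·∫_B u_ε(x) dx. Then the quantity J_B(v_ε) := (1/2)·∫_B ‖∇v_ε(x)‖² dx − λ₁·log(∫_B e^{v_ε(x)} dx) − (λ₂/γ)·log(∫_B e^{−γ·v_ε(x)} dx) tends to −∞ as ε → 0⁺. -/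
open Real

/-- The normalized bubble v_ε = u_ε − (π r0²)⁻¹ ∫_B u_ε. -/
noncomputable def nbubble (r0 ε : ℝ) (x : EuclideanSpace ℝ (Fin 2)) : ℝ :=
  bubble ε x -
    (π * r0 ^ 2)⁻¹ * ∫ y in Metric.ball (0 : EuclideanSpace ℝ (Fin 2)) r0, bubble ε y

namespace Stmt14

open MeasureTheory Metric Set intervalIntegral

local notation "E2" => EuclideanSpace ℝ (Fin 2)

variable {ε r0 γ : ℝ}

lemma posq (hε : ε ≠ 0) (x : E2) : 0 < ε^2 + ‖x‖^2 := by positivity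

lemma pos_aux (hε : ε ≠ 0) (r : ℝ) : 0 < ε^2 + r^2 := by positivity

lemma bubble_eq (hε : ε ≠ 0) (x : E2) :
    bubble ε x = log (ε^2) - 2 * log (ε^2 + ‖x‖^2) := by
  rw [bubble, Real.log_div (by positivity) (by positivity)]
  simp only [Real.log_pow]
  push_cast; ring

lemma continuous_bubble (hε : ε ≠ 0) : Continuous (bubble ε) := by
  have : bubble ε = fun x : E2 => log (ε^2) - 2 * log (ε^2 + ‖x‖^2) := by
    ext x; exact bubble_eq hε x
  rw [this]
  have hq : Continuous fun x : E2 => ε^2 + ‖x‖^2 :=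
    continuous_const.add ((continuous_norm).pow 2)
  exact continuous_const.sub (continuous_const.mul
    (hq.log (fun x => (posq hε x).ne')))

lemma continuous_nbubble (hε : ε ≠ 0) : Continuous (nbubble r0 ε) :=
  (continuous_bubble hε).sub continuous_const

lemma integrableOn_ball {f : E2 → ℝ} (hf : Continuous f) (r : ℝ) :
    IntegrableOn f (ball (0:E2) r) volume :=
  ((hf.locallyIntegrable).integrableOn_isCompact (isCompact_closedBall _ _)).mono_set
    ball_subset_closedBall

lemma vol_ball_toReal {r : ℝ} (hr : 0 ≤ r) :
    (volume (ball (0:E2) r)).toReal = π * r^2 := by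
  rw [EuclideanSpace.volume_ball]
  have h2 : ((2:ℕ):ℝ)/2 + 1 = 2 := by norm_num
  simp only [Fintype.card_fin, h2, Real.Gamma_two, div_one,
    Real.sq_sqrt Real.pi_nonneg]
  rw [← ENNReal.ofReal_pow hr, ← ENNReal.ofReal_mul (by positivity)]
  rw [ENNReal.toReal_ofReal (by positivity)]
  ring

lemma vol_ball_one : (volume (ball (0:E2) 1)).toReal = π := by
  rw [vol_ball_toReal zero_le_one]; ring

lemma radial (r0 : ℝ) (g : ℝ → ℝ) :
    ∫ x in ball (0:E2) r0, g ‖x‖ = 2 * π * ∫ r in Set.Ioo (0:ℝ) r0, r * g r := by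
  have h1 : ∫ x in ball (0:E2) r0, g ‖x‖
      = ∫ x : E2, (Set.Iio r0).indicator g ‖x‖ := by
    rw [← MeasureTheory.integral_indicator measurableSet_ball]
    congr 1
    ext x
    by_cases h : ‖x‖ < r0 <;>
      simp [Set.indicator_apply, mem_ball_zero_iff, Set.mem_Iio, h]
  rw [h1, MeasureTheory.integral_fun_norm_addHaar volume ((Set.Iio r0).indicator g)]
  simp only [finrank_euclideanSpace, Fintype.card_fin, vol_ball_one, smul_eq_mul, nsmul_eq_mul]
  have h2 : ∀ y : ℝ, y ^ (2-1) * (Set.Iio r0).indicator g y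
      = (Set.Iio r0).indicator (fun r => r * g r) y := by
    intro y
    simp only [Set.indicator_apply]
    by_cases h : y ∈ Set.Iio r0 <;> simp [h]
  rw [MeasureTheory.setIntegral_congr_fun measurableSet_Ioi (fun y _ => h2 y),
    MeasureTheory.integral_indicator measurableSet_Iio,
    MeasureTheory.Measure.restrict_restrict measurableSet_Iio]
  have : Set.Iio r0 ∩ Set.Ioi 0 = Set.Ioo 0 r0 := by ext y; simp [Set.mem_Ioo, and_comm]
  rw [this, measureReal_def, vol_ball_one]; ring

lemma int1 (hε : ε ≠ 0) (hr : 0 ≤ r0) :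
    ∫ r in Ioo (0:ℝ) r0, r * (ε^2+r^2)⁻¹ = (log (ε^2+r0^2) - log (ε^2+0^2))/2 := by
  rw [← MeasureTheory.integral_Ioc_eq_integral_Ioo, ← intervalIntegral.integral_of_le hr]
  have : ∀ r ∈ uIcc (0:ℝ) r0, HasDerivAt (fun r => log (ε^2+r^2)/2) (r * (ε^2+r^2)⁻¹) r := by
    intro r _
    have h1 : HasDerivAt (fun r : ℝ => ε^2+r^2) (2*r) r := by
      simpa using ((hasDerivAt_pow 2 r).const_add (ε^2))
    have := (h1.log (pos_aux hε r).ne').div_const 2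
    refine this.congr_deriv ?_
    field_simp
  rw [intervalIntegral.integral_eq_sub_of_hasDerivAt this]
  · ring
  · apply Continuous.intervalIntegrable
    exact continuous_id.mul (((continuous_const.add (continuous_pow 2)).inv₀
      (fun r => (pos_aux hε r).ne')))

lemma int2 (hε : ε ≠ 0) (hr : 0 ≤ r0) :
    ∫ r in Ioo (0:ℝ) r0, r * log (ε^2/(ε^2+r^2)^2)
      = (r0^2/2) * log (ε^2) - ((ε^2+r0^2)*(log (ε^2+r0^2)-1)) + ε^2*(log (ε^2)-1) := by
  rw [← MeasureTheory.integral_Ioc_eq_integral_Ioo, ← intervalIntegral.integral_of_le hr]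
  have key : ∀ r ∈ uIcc (0:ℝ) r0,
      HasDerivAt (fun r => (r^2/2) * log (ε^2) - ((ε^2+r^2)*(log (ε^2+r^2)-1)))
        (r * log (ε^2/(ε^2+r^2)^2)) r := by
    intro r _
    have h1 : HasDerivAt (fun r : ℝ => ε^2+r^2) (2*r) r := by
      simpa using ((hasDerivAt_pow 2 r).const_add (ε^2))
    have h2 : HasDerivAt (fun r : ℝ => (r^2/2) * log (ε^2)) (r * log (ε^2)) r := by
      have := ((hasDerivAt_pow 2 r).div_const 2).mul_const (log (ε^2))
      refine this.congr_deriv ?_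
      ring
    have h3 : HasDerivAt (fun r : ℝ => (ε^2+r^2)*(log (ε^2+r^2)-1))
        ((2*r) * (log (ε^2+r^2)-1) + (ε^2+r^2) * ((2*r) * (ε^2+r^2)⁻¹)) r := by
      exact h1.mul ((h1.log (pos_aux hε r).ne').sub_const 1)
    have := h2.sub h3
    refine this.congr_deriv ?_
    symm
    rw [Real.log_div (by positivity) (by positivity)]
    simp only [Real.log_pow]
    push_cast
    field_simp
    ring
  rw [intervalIntegral.integral_eq_sub_of_hasDerivAt key]
  · norm_num
  · apply Continuous.intervalIntegrable
    have hc : Continuous fun r : ℝ => (ε^2+r^2) := by continuity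
    have : ∀ r : ℝ, r * log (ε^2/(ε^2+r^2)^2) = r * log (ε^2) - 2 * (r * log (ε^2+r^2)) := by
      intro r
      rw [Real.log_div (by positivity) (by positivity)]
      simp only [Real.log_pow]
      push_cast
      ring
    simp only [this]
    have hlog : Continuous fun r : ℝ => log (ε^2+r^2) :=
      hc.log (fun r => (pos_aux hε r).ne')
    exact (continuous_id.mul continuous_const).sub
      (continuous_const.mul (continuous_id.mul hlog))

lemma grad_bubble (hε : ε ≠ 0) (x : E2) :
    HasGradientAt (bubble ε) ((-4/(ε^2+‖x‖^2)) • x) x := by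
  have h0 : HasFDerivAt (fun y : E2 => ‖y‖^2) ((2:ℝ) • (innerSL ℝ x : E2 →L[ℝ] ℝ)) x := by
    have := (hasFDerivAt_id x).inner ℝ (hasFDerivAt_id x)
    simp only [id_eq] at this
    have heq : (fun y : E2 => @inner ℝ _ _ y y) = fun y : E2 => ‖y‖^2 := by
      ext y; exact real_inner_self_eq_norm_sq y
    rw [heq] at this
    refine this.congr_fderiv ?_
    symm
    ext y
    simp [real_inner_comm]
    ring
  have hq : HasFDerivAt (fun y : E2 => ε^2 + ‖y‖^2)
      ((2:ℝ) • (innerSL ℝ x : E2 →L[ℝ] ℝ)) x := h0.const_add (ε^2)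
  have hlog : HasDerivAt Real.log (ε^2+‖x‖^2)⁻¹ (ε^2+‖x‖^2) :=
    Real.hasDerivAt_log (posq hε x).ne'
  have hcomp : HasFDerivAt (fun y : E2 => log (ε^2 + ‖y‖^2))
      ((ε^2+‖x‖^2)⁻¹ • ((2:ℝ) • (innerSL ℝ x : E2 →L[ℝ] ℝ))) x :=
    (hlog.comp_hasFDerivAt x hq :)
  have hf : HasFDerivAt (bubble ε)
      (-((2:ℝ) • ((ε^2+‖x‖^2)⁻¹ • ((2:ℝ) • (innerSL ℝ x : E2 →L[ℝ] ℝ))))) x := by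
    have := (hcomp.const_mul (2:ℝ)).const_sub (log (ε^2))
    have heq : (fun y : E2 => log (ε^2) - 2 * log (ε^2 + ‖y‖^2)) = bubble ε := by
      ext y; rw [bubble_eq hε]
    rwa [heq] at this
  rw [hasGradientAt_iff_hasFDerivAt]
  refine hf.congr_fderiv ?_
  symm
  ext y
  simp only [InnerProductSpace.toDual_apply_apply, ContinuousLinearMap.neg_apply,
    ContinuousLinearMap.smul_apply, innerSL_apply_apply, smul_eq_mul]
  rw [real_inner_smul_left]
  field_simp
  ring

lemma grad_nbubble (hε : ε ≠ 0) (x : E2) :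
    gradient (nbubble r0 ε) x = (-4/(ε^2+‖x‖^2)) • x := by
  have h := grad_bubble hε x
  have h2 : HasGradientAt (nbubble r0 ε) ((-4/(ε^2+‖x‖^2)) • x) x := by
    rw [hasGradientAt_iff_hasFDerivAt] at h ⊢
    exact h.sub_const _
  exact h2.gradient

/-- the constant in c_ε = log ε² + A(ε). -/
noncomputable def Af (r0 ε : ℝ) : ℝ :=
  (2/r0^2) * (ε^2 * log (ε^2) - ε^2 - (ε^2+r0^2) * (log (ε^2+r0^2) - 1))

lemma c_eq (hε : ε ≠ 0) (hr : 0 < r0) :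
    (π * r0 ^ 2)⁻¹ * (∫ y in ball (0 : E2) r0, bubble ε y) = log (ε^2) + Af r0 ε := by
  have hb : ∀ y : E2, bubble ε y = (fun r => log (ε^2/(ε^2+r^2)^2)) ‖y‖ := by
    intro y; rw [bubble]
  have h1 : (∫ y in ball (0 : E2) r0, bubble ε y)
      = 2 * π * ∫ r in Ioo (0:ℝ) r0, r * log (ε^2/(ε^2+r^2)^2) := by
    rw [← radial r0 fun r => log (ε^2/(ε^2+r^2)^2)]
    exact MeasureTheory.setIntegral_congr_fun measurableSet_ball (fun y _ => hb y)
  rw [h1, int2 hε hr.le, Af]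
  have hπ : π ≠ 0 := Real.pi_ne_zero
  field_simp
  ring

lemma continuous_Af (hr : 0 < r0) : Continuous (Af r0) := by
  unfold Af
  have h1 : Continuous fun ε : ℝ => ε^2 * log (ε^2) :=
    Real.continuous_mul_log.comp (continuous_pow 2)
  have h2 : Continuous fun ε : ℝ => (ε^2+r0^2) * (log (ε^2+r0^2) - 1) := by
    have hc : Continuous fun ε : ℝ => ε^2+r0^2 := by continuity
    have := (Real.continuous_mul_log.comp hc).sub hc
    convert this using 1
    ext ε
    simp only [Pi.sub_apply, Function.comp_apply]
    ring
  exact continuous_const.mul ((h1.sub (continuous_pow 2)).sub h2)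

lemma term1 (hε : ε ≠ 0) (hr : 0 < r0) :
    ∫ x in ball (0:E2) r0, ‖gradient (nbubble r0 ε) x‖^2
      ≤ 16*π*(log (ε^2+r0^2) - log (ε^2+0^2)) := by
  have hgr : ∀ x ∈ ball (0:E2) r0, ‖gradient (nbubble r0 ε) x‖^2
      = (4/(ε^2+‖x‖^2))^2 * ‖x‖^2 := by
    intro x _
    rw [grad_nbubble hε, norm_smul, mul_pow, Real.norm_eq_abs, sq_abs]
    ring
  rw [MeasureTheory.setIntegral_congr_fun measurableSet_ball hgr]
  have hcq : Continuous fun x : E2 => ε^2 + ‖x‖^2 :=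
    continuous_const.add ((continuous_norm).pow 2)
  have hmono : ∫ x in ball (0:E2) r0, (4/(ε^2+‖x‖^2))^2 * ‖x‖^2
      ≤ ∫ x in ball (0:E2) r0, 16*(ε^2+‖x‖^2)⁻¹ := by
    apply MeasureTheory.setIntegral_mono_on
    · exact integrableOn_ball (by fun_prop (disch := intro x; exact (posq hε x).ne')) r0
    · exact integrableOn_ball (continuous_const.mul (hcq.inv₀ fun x => (posq hε x).ne')) r0
    · exact measurableSet_ball
    · intro x _
      have hq0 : 0 < ε^2+‖x‖^2 := posq hε x
      have hn : ‖x‖^2 ≤ ε^2+‖x‖^2 := by nlinarith [sq_nonneg ε]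
      have h1 : (4/(ε^2+‖x‖^2))^2 * ‖x‖^2 = 16*(‖x‖^2/(ε^2+‖x‖^2)^2) := by
        rw [div_pow, div_mul_eq_mul_div, mul_div_assoc]
        norm_num
      have h2 : ‖x‖^2/(ε^2+‖x‖^2)^2 ≤ (ε^2+‖x‖^2)/(ε^2+‖x‖^2)^2 :=
        (div_le_div_iff_of_pos_right (by positivity)).mpr hn
      have h3 : (ε^2+‖x‖^2)/(ε^2+‖x‖^2)^2 = (ε^2+‖x‖^2)⁻¹ := by
        rw [pow_two (ε^2+‖x‖^2), div_mul_eq_div_div, div_self hq0.ne', one_div]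
      calc (4/(ε^2+‖x‖^2))^2 * ‖x‖^2 = 16*(‖x‖^2/(ε^2+‖x‖^2)^2) := h1
      _ ≤ 16*((ε^2+‖x‖^2)/(ε^2+‖x‖^2)^2) := by linarith
      _ = 16*(ε^2+‖x‖^2)⁻¹ := by rw [h3]
  have hradial : ∫ x in ball (0:E2) r0, (ε^2+‖x‖^2)⁻¹
      = 2 * π * ∫ r in Ioo (0:ℝ) r0, r * (ε^2+r^2)⁻¹ := by
    rw [← radial r0 fun r => (ε^2+r^2)⁻¹]
  calc ∫ x in ball (0:E2) r0, (4/(ε^2+‖x‖^2))^2 * ‖x‖^2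
      ≤ ∫ x in ball (0:E2) r0, 16*(ε^2+‖x‖^2)⁻¹ := hmono
  _ = 16 * ∫ x in ball (0:E2) r0, (ε^2+‖x‖^2)⁻¹ := by
      rw [MeasureTheory.integral_const_mul]
  _ = 16 * (2 * π * ((log (ε^2+r0^2) - log (ε^2+0^2))/2)) := by
      rw [hradial, int1 hε hr.le]
  _ = 16*π*(log (ε^2+r0^2) - log (ε^2+0^2)) := by ring

lemma term2 (hε : 0 < ε) (hεr : ε ≤ r0) (hr : 0 < r0) :
    log (π/4) - (log (ε^2) + Af r0 ε)
      ≤ log (∫ x in ball (0:E2) r0, exp (nbubble r0 ε x)) := by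
  set c := (π * r0 ^ 2)⁻¹ * ∫ y in ball (0 : E2) r0, bubble ε y with hcdef
  have hexp : ∀ x ∈ ball (0:E2) r0, exp (nbubble r0 ε x) = exp (-c) * exp (bubble ε x) := by
    intro x _
    rw [nbubble, ← Real.exp_add]
    congr 1
    ring
  have hI : ∫ x in ball (0:E2) r0, exp (nbubble r0 ε x)
      = exp (-c) * ∫ x in ball (0:E2) r0, exp (bubble ε x) := by
    rw [MeasureTheory.setIntegral_congr_fun measurableSet_ball hexp,
      MeasureTheory.integral_const_mul]
  have hint : IntegrableOn (fun x => exp (bubble ε x)) (ball (0:E2) r0) volume :=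
    integrableOn_ball ((continuous_bubble hε.ne').rexp) r0
  have hlow : π/4 ≤ ∫ x in ball (0:E2) r0, exp (bubble ε x) := by
    have hsub : ball (0:E2) ε ⊆ ball 0 r0 := ball_subset_ball hεr
    have h1 : ∫ x in ball (0:E2) ε, exp (bubble ε x)
        ≤ ∫ x in ball (0:E2) r0, exp (bubble ε x) :=
      MeasureTheory.setIntegral_mono_set hint
        (Filter.Eventually.of_forall fun x => (exp_pos _).le)
        (HasSubset.Subset.eventuallyLE hsub)
    have h2 : (1/(4*ε^2)) * (volume (ball (0:E2) ε)).toReal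
        ≤ ∫ x in ball (0:E2) ε, exp (bubble ε x) := by
      rw [mul_comm, ← smul_eq_mul, ← measureReal_def]
      apply MeasureTheory.setIntegral_ge_of_const_le measurableSet_ball
        measure_ball_lt_top.ne
      · intro x hx
        have hx' : ‖x‖ < ε := mem_ball_zero_iff.mp hx
        rw [bubble, Real.exp_log (by positivity)]
        have hq : ε^2+‖x‖^2 ≤ 2*ε^2 := by nlinarith [norm_nonneg x]
        rw [div_le_div_iff₀ (by positivity) (by positivity)]
        nlinarith [posq hε.ne' x]
      · exact hint.mono_set hsub
    rw [vol_ball_toReal hε.le] at h2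
    calc π/4 = (1/(4*ε^2))*(π*ε^2) := by field_simp
    _ ≤ _ := h2
    _ ≤ _ := h1
  have hIpos : (0:ℝ) < exp (-c) * (π/4) := by positivity
  have hle : exp (-c) * (π/4) ≤ ∫ x in ball (0:E2) r0, exp (nbubble r0 ε x) := by
    rw [hI]
    exact mul_le_mul_of_nonneg_left hlow (exp_pos _).le
  have hlog := Real.log_le_log hIpos hle
  rw [Real.log_mul (exp_pos _).ne' (by positivity), Real.log_exp] at hlog
  have hce : c = log (ε^2) + Af r0 ε := c_eq hε.ne' hr
  linarith

lemma term3 (hε : 0 < ε) (hr : 0 < r0) (hγ : 0 < γ) :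
    log (3/4*(π*r0^2)) + (γ * Af r0 ε + 2*γ*log (r0^2/4))
      ≤ log (∫ x in ball (0:E2) r0, exp (-γ * nbubble r0 ε x)) := by
  set c := (π * r0 ^ 2)⁻¹ * ∫ y in ball (0 : E2) r0, bubble ε y with hcdef
  have hce : c = log (ε^2) + Af r0 ε := c_eq hε.ne' hr
  set S := ball (0:E2) r0 \ ball (0:E2) (r0/2) with hSdef
  have hSm : MeasurableSet S := measurableSet_ball.diff measurableSet_ball
  have hSsub : S ⊆ ball (0:E2) r0 := Set.diff_subset
  have hsub2 : ball (0:E2) (r0/2) ⊆ ball (0:E2) r0 := ball_subset_ball (by linarith)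
  have hvolS : (volume S).toReal = 3/4*(π*r0^2) := by
    rw [hSdef, measure_diff hsub2 measurableSet_ball.nullMeasurableSet
      measure_ball_lt_top.ne,
      ENNReal.toReal_sub_of_le (measure_mono hsub2) measure_ball_lt_top.ne,
      vol_ball_toReal hr.le, vol_ball_toReal (by linarith : (0:ℝ) ≤ r0/2)]
    ring
  have hint : IntegrableOn (fun x => exp (-γ * nbubble r0 ε x)) (ball (0:E2) r0) volume :=
    integrableOn_ball ((continuous_const.mul (continuous_nbubble hε.ne')).rexp) r0
  have hval : ∀ x : E2, -γ * nbubble r0 ε x = γ * Af r0 ε + 2*γ*log (ε^2+‖x‖^2) := by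
    intro x
    rw [nbubble, ← hcdef, hce, bubble_eq hε.ne']
    ring
  have hpt : ∀ x ∈ S, exp (γ * Af r0 ε + 2*γ*log (r0^2/4)) ≤ exp (-γ * nbubble r0 ε x) := by
    intro x hx
    rw [hval]
    apply Real.exp_le_exp.mpr
    have hx2 : r0/2 ≤ ‖x‖ := by
      by_contra h
      exact hx.2 (mem_ball_zero_iff.mpr (not_le.mp h))
    have hq : r0^2/4 ≤ ε^2+‖x‖^2 := by nlinarith [sq_nonneg ε]
    have := Real.log_le_log (by positivity : (0:ℝ) < r0^2/4) hq
    nlinarith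
  have h1 : ∫ x in S, exp (-γ * nbubble r0 ε x)
      ≤ ∫ x in ball (0:E2) r0, exp (-γ * nbubble r0 ε x) :=
    MeasureTheory.setIntegral_mono_set hint
      (Filter.Eventually.of_forall fun x => (exp_pos _).le)
      (HasSubset.Subset.eventuallyLE hSsub)
  have h2 : exp (γ * Af r0 ε + 2*γ*log (r0^2/4)) * (volume S).toReal
      ≤ ∫ x in S, exp (-γ * nbubble r0 ε x) := by
    rw [mul_comm, ← smul_eq_mul, ← measureReal_def]
    apply MeasureTheory.setIntegral_ge_of_const_le hSm
      (((measure_mono hSsub).trans_lt measure_ball_lt_top).ne) hpt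
      (hint.mono_set hSsub)
  rw [hvolS] at h2
  have hIpos : (0:ℝ) < exp (γ * Af r0 ε + 2*γ*log (r0^2/4)) * (3/4*(π*r0^2)) := by
    positivity
  have hlog := Real.log_le_log hIpos (h2.trans h1)
  rw [Real.log_mul (exp_pos _).ne' (by positivity), Real.log_exp] at hlog
  linarith

noncomputable def Rf (r0 γ lam₁ lam₂ : ℝ) (ε : ℝ) : ℝ :=
  8*π*log (ε^2+r0^2) + (lam₁ - lam₂) * Af r0 ε
    - lam₁ * log (π/4) - (lam₂/γ) * log (3/4*(π*r0^2)) - 2*lam₂*log (r0^2/4)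

lemma continuous_Rf (hr : 0 < r0) (γ lam₁ lam₂ : ℝ) : Continuous (Rf r0 γ lam₁ lam₂) := by
  unfold Rf
  have h1 : Continuous fun ε : ℝ => log (ε^2+r0^2) :=
    Continuous.log (by continuity) (fun ε => by positivity)
  exact ((((continuous_const.mul h1).add
    (continuous_const.mul (continuous_Af hr))).sub continuous_const).sub
    continuous_const).sub continuous_const

lemma tendsto_log_sq : Filter.Tendsto (fun ε : ℝ => log (ε^2))
    (nhdsWithin 0 (Set.Ioi 0)) Filter.atBot := by
  have heq : (fun ε : ℝ => log (ε^2)) = fun ε : ℝ => 2 * log ε := by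
    ext ε
    rw [Real.log_pow]
    norm_num
  rw [heq]
  exact Real.tendsto_log_nhdsGT_zero.const_mul_atBot two_pos

end Stmt14

/-- if lam₁ > 8π then J_B(v_ε) → −∞ as ε → 0⁺. -/
theorem stmt_14 (r0 γ lam₁ lam₂ : ℝ) (hr : 0 < r0) (hγ : γ ∈ Set.Ioc (0:ℝ) 1)
    (h₁ : 8 * π < lam₁) (h₂ : 0 ≤ lam₂) :
    Filter.Tendsto (fun ε : ℝ =>
        (1 / 2) * (∫ x in Metric.ball (0 : EuclideanSpace ℝ (Fin 2)) r0,
            ‖gradient (nbubble r0 ε) x‖ ^ 2)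
        - lam₁ * Real.log (∫ x in Metric.ball (0 : EuclideanSpace ℝ (Fin 2)) r0,
            Real.exp (nbubble r0 ε x))
        - (lam₂ / γ) * Real.log (∫ x in Metric.ball (0 : EuclideanSpace ℝ (Fin 2)) r0,
            Real.exp (-γ * nbubble r0 ε x)))
      (nhdsWithin 0 (Set.Ioi 0)) Filter.atBot := by
  obtain ⟨hγ0, hγ1⟩ := hγ
  have hπ := Real.pi_pos
  have hlam1 : 0 < lam₁ := by linarith
  have hlam2γ : 0 ≤ lam₂/γ := div_nonneg h₂ hγ0.le
  have hkey : ∀ᶠ ε in nhdsWithin (0:ℝ) (Set.Ioi 0),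
      (1 / 2) * (∫ x in Metric.ball (0 : EuclideanSpace ℝ (Fin 2)) r0,
            ‖gradient (nbubble r0 ε) x‖ ^ 2)
        - lam₁ * Real.log (∫ x in Metric.ball (0 : EuclideanSpace ℝ (Fin 2)) r0,
            Real.exp (nbubble r0 ε x))
        - (lam₂ / γ) * Real.log (∫ x in Metric.ball (0 : EuclideanSpace ℝ (Fin 2)) r0,
            Real.exp (-γ * nbubble r0 ε x))
      ≤ (lam₁ - 8*π) * log (ε^2) + Stmt14.Rf r0 γ lam₁ lam₂ ε := by
    have hIoo : Set.Ioo (0:ℝ) r0 ∈ nhdsWithin (0:ℝ) (Set.Ioi 0) :=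
      Ioo_mem_nhdsGT_of_mem ⟨le_refl 0, hr⟩
    refine Filter.eventually_of_mem hIoo (fun ε hε => ?_)
    obtain ⟨hε0, hεr⟩ := hε
    have h1 := Stmt14.term1 hε0.ne' hr
    have h2 := Stmt14.term2 hε0 hεr.le hr
    have h3 := Stmt14.term3 hε0 hr hγ0
    have h2' := mul_le_mul_of_nonneg_left h2 hlam1.le
    have h3' := mul_le_mul_of_nonneg_left h3 hlam2γ
    have hEq : (1/2) * (16*π*(log (ε^2+r0^2) - log (ε^2+0^2)))
        - lam₁ * (log (π/4) - (log (ε^2) + Stmt14.Af r0 ε))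
        - (lam₂/γ) * (log (3/4*(π*r0^2)) + (γ * Stmt14.Af r0 ε + 2*γ*log (r0^2/4)))
        = (lam₁ - 8*π) * log (ε^2) + Stmt14.Rf r0 γ lam₁ lam₂ ε := by
      rw [Stmt14.Rf]
      norm_num
      field_simp
      ring
    rw [← hEq]
    gcongr

  have hRt : Filter.Tendsto (Stmt14.Rf r0 γ lam₁ lam₂) (nhdsWithin 0 (Set.Ioi 0))
      (nhds (Stmt14.Rf r0 γ lam₁ lam₂ 0)) :=
    ((Stmt14.continuous_Rf hr γ lam₁ lam₂).tendsto 0).mono_left nhdsWithin_le_nhds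
  have hφ : Filter.Tendsto (fun ε : ℝ => (lam₁ - 8*π) * log (ε^2) + Stmt14.Rf r0 γ lam₁ lam₂ ε)
      (nhdsWithin 0 (Set.Ioi 0)) Filter.atBot :=
    (Stmt14.tendsto_log_sq.const_mul_atBot (by linarith)).atBot_add hRt
  exact Filter.tendsto_atBot_mono' _ hkey hφ
end
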